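/- For the dihedral-type matrix T indexed by {1,...,r} with entries T_{ab} = 2cos(2πab/(2r+1)), and any integer m coprime to 2r+1, the map a ↦ (the unique a' ∈ {1,...,r} with a' ≡ ±ma mod (2r+1)) is a well-defined permutation σ_m of {1,...,r}, and T_{σ_m(a), b} = T_{a, σ_m(b)} for all a,b. -/

import Mathlib

open Real

/-- The dihedral-type matrix `T` indexed by `{1,…,r}` (realised as `Fin r` via `a ↦ a+1`),
with entries `T_{ab} = 2 cos(2πab/(2r+1))`. -/
noncomputable def dihedralT (r : ℕ) (a b : Fin r) : ℝ :=
  2 * Real.cos (2 * π * ((a : ℕ) + 1) * ((b : ℕ) + 1) / (2 * r + 1))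

/-!
The residues `±1, …, ±r` modulo `κ = 2r+1` are exactly the nonzero ones, each pair `{a, -a}` meeting
`{1, …, r}` once; multiplication by a unit `m` permutes these pairs, which gives `σ_m`. The symmetry
of `T` then comes from `σ_m(a) b ≡ ± m a b ≡ ± a σ_m(b) (mod κ)`, since `cos (2πx/κ)` only depends on
`x` up to sign modulo `κ`.
-/

namespace Int

def ModEqPM (n a b : ℤ) : Prop :=
  a ≡ b [ZMOD n] ∨ a ≡ -b [ZMOD n]

namespace ModEqPM

variable {n a b c : ℤ}

protected theorem symm (h : ModEqPM n a b) : ModEqPM n b a := by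
  rcases h with h | h
  · exact Or.inl h.symm
  · exact Or.inr (by simpa using h.neg.symm)

protected theorem trans (h₁ : ModEqPM n a b) (h₂ : ModEqPM n b c) : ModEqPM n a c := by
  rcases h₁ with h₁ | h₁ <;> rcases h₂ with h₂ | h₂
  · exact Or.inl (h₁.trans h₂)
  · exact Or.inr (h₁.trans h₂)
  · exact Or.inr (h₁.trans h₂.neg)
  · exact Or.inl (by simpa using h₁.trans h₂.neg)

theorem mul_left (c : ℤ) (h : ModEqPM n a b) : ModEqPM n (c * a) (c * b) := by
  rcases h with h | h
  · exact Or.inl (h.mul_left c)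
  · exact Or.inr (by simpa using h.mul_left c)

theorem mul_right (c : ℤ) (h : ModEqPM n a b) : ModEqPM n (a * c) (b * c) := by
  simpa only [mul_comm _ c] using h.mul_left c

theorem cancel_left_of_isCoprime (hc : IsCoprime n c) (h : ModEqPM n (c * a) (c * b)) :
    ModEqPM n a b := by
  have cancel : ∀ {x}, c * a ≡ c * x [ZMOD n] → a ≡ x [ZMOD n] := fun hx =>
    Int.modEq_iff_dvd.2 (hc.dvd_of_dvd_mul_left (by simpa only [mul_sub] using hx.dvd))
  rcases h with h | h
  · exact Or.inl (cancel h)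
  · exact Or.inr (cancel (by simpa using h))

theorem cos_two_pi_mul_div_eq (h : ModEqPM n a b) :
    cos (2 * π * a / n) = cos (2 * π * b / n) := by
  rcases eq_or_ne n 0 with rfl | hn
  · simp
  have hn' : (n : ℝ) ≠ 0 := by exact_mod_cast hn
  rw [Real.cos_eq_cos_iff]
  rcases h with h | h <;> obtain ⟨t, ht⟩ := h.dvd
  · refine ⟨t, Or.inl ?_⟩
    rw [show (b : ℝ) = a + n * t by exact_mod_cast (by linarith : b = a + n * t)]
    field_simp
    ring
  · refine ⟨-t, Or.inr ?_⟩
    rw [show (b : ℝ) = -a - n * t by exact_mod_cast (by linarith : b = -a - n * t)]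
    push_cast
    field_simp
    ring

end ModEqPM

end Int

open Int

section Fold

variable {r : ℕ}

theorem not_dvd_of_mem_Icc {y : ℤ} (hy : y ∈ Set.Icc 1 (r : ℤ)) : ¬ (2 * (r : ℤ) + 1) ∣ y := by
  obtain ⟨hy₁, hy₂⟩ := hy
  intro h
  linarith [Int.eq_zero_of_dvd_of_nonneg_of_lt (by linarith) (by linarith) h]

theorem eq_of_modEqPM_of_mem_Icc {y z : ℤ} (hy : y ∈ Set.Icc 1 (r : ℤ)) (hz : z ∈ Set.Icc 1 (r : ℤ))
    (h : ModEqPM (2 * r + 1) y z) : y = z := by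
  obtain ⟨hy₁, hy₂⟩ := hy
  obtain ⟨hz₁, hz₂⟩ := hz
  rcases h with h | h
  · have := Int.eq_zero_of_abs_lt_dvd h.dvd (abs_lt.2 ⟨by linarith, by linarith⟩)
    linarith
  · have hsum : (2 * (r : ℤ) + 1) ∣ y + z := by
      simpa only [show -z - y = -(y + z) by ring, dvd_neg] using h.dvd
    linarith [Int.eq_zero_of_dvd_of_nonneg_of_lt (by linarith) (by linarith) hsum]

theorem exists_modEqPM_mem_Icc {x : ℤ} (hx : ¬ (2 * (r : ℤ) + 1) ∣ x) :
    ∃ y : ℤ, y ∈ Set.Icc 1 (r : ℤ) ∧ ModEqPM (2 * r + 1) y x := by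
  have hκ : (0 : ℤ) < 2 * r + 1 := by positivity
  have hx₀ : x % (2 * r + 1) ≠ 0 := fun h => hx (Int.dvd_of_emod_eq_zero h)
  have hx₁ := Int.emod_nonneg x hκ.ne'
  have hx₂ := Int.emod_lt_of_pos x hκ
  by_cases hle : x % (2 * r + 1) ≤ r
  · exact ⟨_, ⟨by omega, hle⟩, Or.inl (Int.mod_modEq x _)⟩
  · refine ⟨2 * r + 1 - x % (2 * r + 1), ⟨by omega, by omega⟩, Or.inr ?_⟩
    exact (Int.modEq_iff_dvd.2 ⟨-1, by ring⟩).trans (Int.mod_modEq x _).neg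

theorem existsUnique_modEqPM_mem_Icc {x : ℤ} (hx : ¬ (2 * (r : ℤ) + 1) ∣ x) :
    ∃! y : ℤ, y ∈ Set.Icc 1 (r : ℤ) ∧ ModEqPM (2 * r + 1) y x :=
  let ⟨y, hy, hyx⟩ := exists_modEqPM_mem_Icc hx
  ⟨y, ⟨hy, hyx⟩, fun _ ⟨hz, hzx⟩ => eq_of_modEqPM_of_mem_Icc hz hy (hzx.trans hyx.symm)⟩

end Fold

section GaloisPerm

variable {r : ℕ}

theorem Fin.val_add_one_mem_Icc (a : Fin r) : ((a : ℕ) : ℤ) + 1 ∈ Set.Icc 1 (r : ℤ) :=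
  ⟨by omega, by omega⟩

theorem exists_perm_modEqPM_mul {m : ℤ} (hm : IsCoprime m (2 * r + 1)) :
    ∃ σ : Equiv.Perm (Fin r), ∀ a : Fin r,
      ModEqPM (2 * r + 1) (((σ a : ℕ) : ℤ) + 1) (m * (((a : ℕ) : ℤ) + 1)) := by
  have hfold : ∀ a : Fin r, ∃ b : Fin r,
      ModEqPM (2 * r + 1) (((b : ℕ) : ℤ) + 1) (m * (((a : ℕ) : ℤ) + 1)) := by
    intro a
    obtain ⟨y, ⟨hy₁, hy₂⟩, hyx⟩ := exists_modEqPM_mem_Icc (r := r) fun h =>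
      not_dvd_of_mem_Icc (Fin.val_add_one_mem_Icc a) (hm.symm.dvd_of_dvd_mul_left h)
    refine ⟨⟨(y - 1).toNat, by omega⟩, ?_⟩
    rwa [show (((y - 1).toNat : ℕ) : ℤ) + 1 = y by omega]
  choose f hf using hfold
  have hinj : Function.Injective f := fun a b hab => by
    have hab' := ((hf a).symm.trans (hab ▸ hf b)).cancel_left_of_isCoprime hm.symm
    have := eq_of_modEqPM_of_mem_Icc (Fin.val_add_one_mem_Icc a) (Fin.val_add_one_mem_Icc b) hab'
    omega
  exact ⟨Equiv.ofBijective f (Finite.injective_iff_bijective.1 hinj), hf⟩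

theorem dihedralT_eq_cos_int (a b : Fin r) :
    dihedralT r a b =
      2 * cos (2 * π * ((((a : ℕ) : ℤ) + 1) * (((b : ℕ) : ℤ) + 1) : ℤ) / (2 * r + 1 : ℤ)) := by
  rw [dihedralT]
  push_cast
  ring_nf

theorem dihedralT_symm_of_modEqPM_mul {σ : Fin r → Fin r} {m : ℤ}
    (hσ : ∀ a : Fin r, ModEqPM (2 * r + 1) (((σ a : ℕ) : ℤ) + 1) (m * (((a : ℕ) : ℤ) + 1)))
    (a b : Fin r) : dihedralT r (σ a) b = dihedralT r a (σ b) := by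
  rw [dihedralT_eq_cos_int, dihedralT_eq_cos_int, ModEqPM.cos_two_pi_mul_div_eq]
  refine ((hσ a).mul_right _).trans ?_
  rw [mul_assoc, mul_left_comm]
  exact ((hσ b).mul_left _).symm

end GaloisPerm

theorem dihedralT_galois_symmetry_general (r : ℕ) (m : ℤ)
    (hm : Int.gcd m (2 * r + 1) = 1) :
    (∀ a : ℤ, ¬ ((2 * (r : ℤ) + 1) ∣ a) →
      ∃! a' : ℤ, (1 ≤ a' ∧ a' ≤ r) ∧
        (a' ≡ m * a [ZMOD (2 * r + 1)] ∨ a' ≡ -(m * a) [ZMOD (2 * r + 1)])) ∧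
    ∃ σ : Equiv.Perm (Fin r),
      (∀ a : Fin r, (((σ a : ℕ) : ℤ) + 1 ≡ m * ((a : ℕ) + 1) [ZMOD (2 * r + 1)] ∨
        ((σ a : ℕ) : ℤ) + 1 ≡ -(m * ((a : ℕ) + 1)) [ZMOD (2 * r + 1)])) ∧
      ∀ a b : Fin r, dihedralT r (σ a) b = dihedralT r a (σ b) := by
  have hcop : IsCoprime m (2 * r + 1) := Int.isCoprime_iff_gcd_eq_one.2 hm
  obtain ⟨σ, hσ⟩ := exists_perm_modEqPM_mul hcop
  exact ⟨fun a ha => existsUnique_modEqPM_mem_Icc fun h => ha (hcop.symm.dvd_of_dvd_mul_left h),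
    σ, hσ, dihedralT_symm_of_modEqPM_mul hσ⟩

theorem dihedralT_galois_symmetry (r : ℕ) (hr : 1 ≤ r) (m : ℤ)
    (hm : Int.gcd m (2 * r + 1) = 1) :
    (∀ a : ℤ, ¬ ((2 * (r : ℤ) + 1) ∣ a) →
      ∃! a' : ℤ, (1 ≤ a' ∧ a' ≤ r) ∧
        (a' ≡ m * a [ZMOD (2 * r + 1)] ∨ a' ≡ -(m * a) [ZMOD (2 * r + 1)])) ∧
    ∃ σ : Equiv.Perm (Fin r),
      (∀ a : Fin r, (((σ a : ℕ) : ℤ) + 1 ≡ m * ((a : ℕ) + 1) [ZMOD (2 * r + 1)] ∨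
        ((σ a : ℕ) : ℤ) + 1 ≡ -(m * ((a : ℕ) + 1)) [ZMOD (2 * r + 1)])) ∧
      ∀ a b : Fin r, dihedralT r (σ a) b = dihedralT r a (σ b) :=
  dihedralT_galois_symmetry_general r m hm
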